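/- For every information set I of player i and every action a ∈ A(I), the baseline-enhanced counterfactual value estimate has the same expectation as the original outcome-sampling counterfactual value estimate: E_{z∼ξ}[v̂_i^b(σ,I,a|z)] = E_{z∼ξ}[ṽ_i(σ,I,a|z)]. -/

import Mathlib

open Finset

variable {A : Type*} [Fintype A] [DecidableEq A]

/-- The set of legal actions at history `h`: those `a` with `h ++ [a] ∈ H`. -/
def legal (H : Finset (List A)) (h : List A) : Finset A :=
  Finset.univ.filter fun a => h ++ [a] ∈ H

/-- Product of `f (h', a)` over all prefix steps `h'·a ⊑ h` of the history `h`.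
With `f = ξ` this is the sampling probability `q(h)`; note `pathProd f [] = 1`. -/
def pathProd (f : List A → A → ℝ) (h : List A) : ℝ :=
  ∏ k : Fin h.length, f (h.take (k : ℕ)) (h.get k)

/-- `π^σ(h, z)`: product of `σ (h', a)` over all prefix steps `h'·a` with `h ⊏ h'·a ⊑ z`. -/
def sfxProd (σ : List A → A → ℝ) (h z : List A) : ℝ :=
  ∏ k : Fin z.length, if h.length ≤ (k : ℕ) then σ (z.take (k : ℕ)) (z.get k) else 1

/-- `π^σ_{-i}(h)`: product of `σ (h', a)` over all prefix steps `h'·a ⊑ h` with `τ h' ≠ i`. -/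
def oppProd {N : Type*} [DecidableEq N] (σ : List A → A → ℝ) (τ : List A → N) (i : N)
    (h : List A) : ℝ :=
  ∏ k : Fin h.length, if τ (h.take (k : ℕ)) ≠ i then σ (h.take (k : ℕ)) (h.get k) else 1

/-- The expected value `u_i^σ(h) = Σ_{z ∈ Z, h ⊑ z} π^σ(h,z)·u_i(z)`. -/
def expUtil (σ : List A → A → ℝ) (u : List A → ℝ) (Z : Finset (List A)) (h : List A) : ℝ :=
  ∑ z ∈ Z.filter (fun z => h <+: z), sfxProd σ h z * u z

/-- The plain sampled history value `û_i(σ, h | z)`: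
`u_i(h)` if `h = z`, `Σ_{a ∈ A(h)} σ(h,a)·û_i(σ,h,a|z)` if `h ⊏ z`, and `0` otherwise,
where `û_i(σ,h,a|z) = û_i(σ,h·a|z)/ξ(h,a)` if `h·a ⊑ z` and `0` otherwise. -/
noncomputable def uhat (ξ σ : List A → A → ℝ) (u : List A → ℝ) (H : Finset (List A))
    (z : List A) (h : List A) : ℝ :=
  if h = z then u z
  else if h <+: z then
    ∑ a ∈ legal H h, σ h a *
      (if hpa : h ++ [a] <+: z then uhat ξ σ u H z (h ++ [a]) / ξ h a else 0)
  else 0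
termination_by z.length - h.length
decreasing_by
  have := hpa.length_le
  simp only [List.length_append, List.length_singleton] at this ⊢
  omega

/-- The plain sampled history-action value `û_i(σ, h, a | z)`. -/
noncomputable def uhatA (ξ σ : List A → A → ℝ) (u : List A → ℝ) (H : Finset (List A))
    (z : List A) (h : List A) (a : A) : ℝ :=
  if h ++ [a] <+: z then uhat ξ σ u H z (h ++ [a]) / ξ h a else 0

/-- The baseline-enhanced sampled history value `û_i^b(σ, h | z)`:
`u_i(h)` if `h = z`, `Σ_{a ∈ A(h)} σ(h,a)·û_i^b(σ,h,a|z)` if `h ⊏ z`, and `0` otherwise,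
where `û_i^b(σ,h,a|z) = b(h,a) + (û_i^b(σ,h·a|z) − b(h,a))/ξ(h,a)` if `h·a ⊑ z`,
`b(h,a)` if `h ⊏ z` and `h·a ⋢ z`, and `0` otherwise. -/
noncomputable def uhatB (ξ σ : List A → A → ℝ) (u : List A → ℝ) (H : Finset (List A))
    (b : List A → A → ℝ) (z : List A) (h : List A) : ℝ :=
  if h = z then u z
  else if h <+: z then
    ∑ a ∈ legal H h, σ h a *
      (if hpa : h ++ [a] <+: z then b h a + (uhatB ξ σ u H b z (h ++ [a]) - b h a) / ξ h a
       else b h a)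
  else 0
termination_by z.length - h.length
decreasing_by
  have := hpa.length_le
  simp only [List.length_append, List.length_singleton] at this ⊢
  omega

/-- The baseline-enhanced sampled history-action value `û_i^b(σ, h, a | z)`. -/
noncomputable def uhatBA (ξ σ : List A → A → ℝ) (u : List A → ℝ) (H : Finset (List A))
    (b : List A → A → ℝ) (z : List A) (h : List A) (a : A) : ℝ :=
  if h ++ [a] <+: z then b h a + (uhatB ξ σ u H b z (h ++ [a]) - b h a) / ξ h a
  else if h <+: z ∧ h ≠ z then b h a
  else 0

/-!
Unbiasedness holds node by node: for every history `g`,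
`Σ_{z ⊒ g} q(z) û^b(σ,g|z) = q(g) u^σ(g)`, by induction from the terminal histories upwards.
For an action `a` at `g`, the terminal histories below `g` have `q`-mass `q(g)` and those
below `g·a` have mass `q(g) ξ(g,a)`. Hence in `Σ_{z ⊒ g} q(z) û^b(σ,g,a|z)` the baseline
`b(g,a)` contributes `q(g) b(g,a)`, the subtracted `b(g,a)/ξ(g,a)` on `z ⊒ g·a` contributes
`-q(g) b(g,a)`, and the importance-weighted `û^b(σ,g·a|z)/ξ(g,a)` contributes `q(g) u^σ(g·a)`
by induction. For `h ∈ I` the weight `π_{-i}(h)/q(h)` turns this into `π_{-i}(h) u^σ(h·a)`,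
which is also the expectation of the outcome-sampling term of `h`, because player `i` acts
at `h` and so `π_{-i}(h·a) = π_{-i}(h)`.
-/

lemma sum_mul_sum_filter_comm {ι κ R : Type*} [NonUnitalNonAssocSemiring R]
    (s : Finset ι) (t : Finset κ) (p : κ → ι → Prop) [∀ h z, Decidable (p h z)]
    (w : ι → R) (f : κ → ι → R) :
    ∑ z ∈ s, w z * ∑ h ∈ t.filter (p · z), f h z
      = ∑ h ∈ t, ∑ z ∈ s.filter (p h ·), w z * f h z := by
  simp_rw [Finset.mul_sum]
  exact Finset.sum_comm' fun z h => by simp only [Finset.mem_filter]; tauto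

section Histories

variable {A : Type*}

lemma exists_append_singleton_prefix {g z : List A} (hp : g <+: z) (hne : g ≠ z) :
    ∃ a, g ++ [a] <+: z := by
  obtain ⟨t, rfl⟩ := hp
  cases t with
  | nil => simp at hne
  | cons a t => exact ⟨a, by simp⟩

lemma eq_of_append_singleton_prefix {g z : List A} {a a' : A}
    (ha : g ++ [a] <+: z) (ha' : g ++ [a'] <+: z) : a = a' := by
  simpa using List.prefix_of_prefix_length_le ha ha' (by simp)

variable (f σ : List A → A → ℝ)

lemma pathProd_nil : pathProd f [] = 1 := by
  simp [pathProd]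

lemma pathProd_append_singleton (h : List A) (a : A) :
    pathProd f (h ++ [a]) = pathProd f h * f h a := by
  unfold pathProd
  rw [← Fin.prod_congr' _ (by simp : h.length + 1 = (h ++ [a]).length), Fin.prod_univ_castSucc]
  congr 1
  · refine Finset.prod_congr rfl fun k _ => ?_
    have hk : (k : ℕ) < h.length := k.isLt
    simp [List.take_append, Nat.sub_eq_zero_of_le hk.le, List.getElem_append_left hk]
  · simp [Fin.last]

lemma oppProd_append_singleton_of_eq {N : Type*} [DecidableEq N] (τ : List A → N) {i : N}
    {h : List A} (hi : τ h = i) (a : A) :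
    oppProd σ τ i (h ++ [a]) = oppProd σ τ i h := by
  have hopp : oppProd σ τ i = pathProd fun h' a' => if τ h' ≠ i then σ h' a' else 1 := rfl
  simp [hopp, pathProd_append_singleton, hi]

lemma sfxProd_self (g : List A) : sfxProd σ g g = 1 :=
  Finset.prod_eq_one fun k _ => if_neg (by omega)

lemma sfxProd_eq_mul_of_prefix {g z : List A} {a : A} (hp : g ++ [a] <+: z) :
    sfxProd σ g z = σ g a * sfxProd σ (g ++ [a]) z := by
  have hlen : g.length < z.length := by simpa using hp.length_le
  set F : Fin z.length → ℝ := fun k => σ (z.take k) (z.get k)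
  have hF : F ⟨g.length, hlen⟩ = σ g a := by
    have htake : z.take g.length = g :=
      (List.prefix_iff_eq_take.mp ((List.prefix_append g [a]).trans hp)).symm
    have hget : z[g.length] = a := by
      simpa using (hp.getElem (i := g.length) (by simp)).symm
    simp [F, htake, hget]
  have hsplit : ∀ k : Fin z.length, (if g.length ≤ (k : ℕ) then F k else 1)
      = (if k = ⟨g.length, hlen⟩ then F k else 1)
        * (if (g ++ [a]).length ≤ (k : ℕ) then F k else 1) := by
    intro k
    by_cases hk : k = ⟨g.length, hlen⟩
    · subst hk; simp
    · have : (k : ℕ) ≠ g.length := fun h => hk (Fin.ext h)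
      by_cases hle : g.length ≤ (k : ℕ)
      · simp [hk, hle, show g.length + 1 ≤ (k : ℕ) by omega]
      · simp [hk, hle, show ¬ g.length + 1 ≤ (k : ℕ) by omega]
  unfold sfxProd
  rw [Finset.prod_congr rfl fun k _ => hsplit k, Finset.prod_mul_distrib,
    Finset.prod_ite_eq', if_pos (Finset.mem_univ _), hF]

variable [DecidableEq A]

lemma filter_prefix_eq_singleton {H Z : Finset (List A)} (hZH : Z ⊆ H)
    (hterm : ∀ z ∈ Z, ∀ h ∈ H, z <+: h → z = h) {g : List A} (hg : g ∈ Z) :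
    Z.filter (g <+: ·) = {g} := by
  ext z
  simp only [Finset.mem_filter, Finset.mem_singleton]
  constructor
  · rintro ⟨hz, hp⟩
    exact (hterm g hg z (hZH hz) hp).symm
  · rintro rfl
    exact ⟨hg, List.prefix_refl z⟩

lemma expUtil_of_mem {H Z : Finset (List A)} (hZH : Z ⊆ H)
    (hterm : ∀ z ∈ Z, ∀ h ∈ H, z <+: h → z = h) (u : List A → ℝ) {g : List A} (hg : g ∈ Z) :
    expUtil σ u Z g = u g := by
  rw [expUtil, filter_prefix_eq_singleton hZH hterm hg, Finset.sum_singleton, sfxProd_self,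
    one_mul]

end Histories

lemma mem_legal {H : Finset (List A)} {h : List A} {a : A} :
    a ∈ legal H h ↔ h ++ [a] ∈ H := by
  simp [legal]

section GameTree

variable (H Z : Finset (List A))

lemma legal_induction {P : List A → Prop} (terminal : ∀ g ∈ Z, P g)
    (step : ∀ g ∈ H, g ∉ Z → (∀ a ∈ legal H g, P (g ++ [a])) → P g) :
    ∀ g ∈ H, P g := by
  intro g hg
  induction hn : H.sup List.length - g.length using Nat.strong_induction_on generalizing g with
  | _ n ih =>
    by_cases hgZ : g ∈ Z
    · exact terminal g hgZ
    refine step g hg hgZ fun a ha => ih _ ?_ _ (mem_legal.1 ha) rfl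
    have := Finset.le_sup (f := List.length) (mem_legal.1 ha)
    simp only [List.length_append, List.length_singleton] at this ⊢
    omega

variable {H Z}

lemma sum_filter_prefix_eq_sum_legal {M : Type*} [AddCommMonoid M]
    (hclosed : ∀ h ∈ H, ∀ h' : List A, h' <+: h → h' ∈ H) (hZH : Z ⊆ H)
    {g : List A} (hgZ : g ∉ Z) (F : List A → M) :
    ∑ z ∈ Z.filter (g <+: ·), F z = ∑ a ∈ legal H g, ∑ z ∈ Z.filter (g ++ [a] <+: ·), F z := by
  rw [← Finset.sum_biUnion]
  · congr 1
    ext z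
    simp only [Finset.mem_filter, Finset.mem_biUnion, mem_legal]
    constructor
    · rintro ⟨hz, hp⟩
      obtain ⟨a, ha⟩ := exists_append_singleton_prefix hp (by rintro rfl; exact hgZ hz)
      exact ⟨a, hclosed z (hZH hz) _ ha, hz, ha⟩
    · rintro ⟨a, -, hz, ha⟩
      exact ⟨hz, (List.prefix_append g [a]).trans ha⟩
  · intro a _ a' _ hne
    simp only [Function.onFun, Finset.disjoint_left, Finset.mem_filter]
    rintro z ⟨-, ha⟩ ⟨-, ha'⟩
    exact hne (eq_of_append_singleton_prefix ha ha')

lemma pathProd_pos (hclosed : ∀ h ∈ H, ∀ h' : List A, h' <+: h → h' ∈ H)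
    (hterm : ∀ z ∈ Z, ∀ h ∈ H, z <+: h → z = h) {ξ : List A → A → ℝ}
    (hξpos : ∀ h ∈ H, h ∉ Z → ∀ a ∈ legal H h, 0 < ξ h a) :
    ∀ h ∈ H, 0 < pathProd ξ h := by
  intro h
  induction h using List.reverseRecOn with
  | nil => simp [pathProd_nil]
  | append_singleton h a ih =>
    intro hha
    have hh : h ∈ H := hclosed _ hha h (List.prefix_append h [a])
    have hhZ : h ∉ Z := fun hz => by
      simpa using hterm h hz (h ++ [a]) hha (List.prefix_append h [a])
    rw [pathProd_append_singleton]
    exact mul_pos (ih hh) (hξpos h hh hhZ a (mem_legal.2 hha))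

lemma sum_pathProd_filter_prefix (hclosed : ∀ h ∈ H, ∀ h' : List A, h' <+: h → h' ∈ H)
    (hZH : Z ⊆ H) (hterm : ∀ z ∈ Z, ∀ h ∈ H, z <+: h → z = h) {ξ : List A → A → ℝ}
    (hξsum : ∀ h ∈ H, h ∉ Z → ∑ a ∈ legal H h, ξ h a = 1) :
    ∀ g ∈ H, ∑ z ∈ Z.filter (g <+: ·), pathProd ξ z = pathProd ξ g := by
  refine legal_induction H Z (fun g hg => ?_) fun g hg hgZ ih => ?_
  · rw [filter_prefix_eq_singleton hZH hterm hg, Finset.sum_singleton]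
  · rw [sum_filter_prefix_eq_sum_legal hclosed hZH hgZ]
    simp_rw [Finset.sum_congr rfl ih, pathProd_append_singleton]
    rw [← Finset.mul_sum, hξsum g hg hgZ, mul_one]

lemma expUtil_eq_sum_legal (hclosed : ∀ h ∈ H, ∀ h' : List A, h' <+: h → h' ∈ H)
    (hZH : Z ⊆ H) (σ : List A → A → ℝ) (u : List A → ℝ) {g : List A} (hgZ : g ∉ Z) :
    expUtil σ u Z g = ∑ a ∈ legal H g, σ g a * expUtil σ u Z (g ++ [a]) := by
  rw [expUtil, sum_filter_prefix_eq_sum_legal hclosed hZH hgZ]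
  refine Finset.sum_congr rfl fun a _ => ?_
  rw [expUtil, Finset.mul_sum]
  refine Finset.sum_congr rfl fun z hz => ?_
  rw [sfxProd_eq_mul_of_prefix σ (Finset.mem_filter.mp hz).2, mul_assoc]

end GameTree

section Estimator

variable {H Z : Finset (List A)} (ξ σ : List A → A → ℝ) (u : List A → ℝ) (b : List A → A → ℝ)

lemma uhatB_self (z : List A) : uhatB ξ σ u H b z z = u z := by
  rw [uhatB]
  simp

lemma uhatB_eq_sum_uhatBA {g z : List A} (hp : g <+: z) (hne : g ≠ z) :
    uhatB ξ σ u H b z g = ∑ a ∈ legal H g, σ g a * uhatBA ξ σ u H b z g a := by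
  rw [uhatB, if_neg hne, if_pos hp]
  refine Finset.sum_congr rfl fun a _ => ?_
  simp only [uhatBA, dite_eq_ite, hp, hne, ne_eq, not_false_eq_true, and_self, if_true]

lemma sum_uhatBA_of_sum_uhatB (hclosed : ∀ h ∈ H, ∀ h' : List A, h' <+: h → h' ∈ H)
    (hZH : Z ⊆ H) (hterm : ∀ z ∈ Z, ∀ h ∈ H, z <+: h → z = h)
    (hξpos : ∀ h ∈ H, h ∉ Z → ∀ a ∈ legal H h, 0 < ξ h a)
    (hξsum : ∀ h ∈ H, h ∉ Z → ∑ a ∈ legal H h, ξ h a = 1)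
    {g : List A} (hg : g ∈ H) (hgZ : g ∉ Z) {a : A} (ha : a ∈ legal H g)
    (hnext : ∑ z ∈ Z.filter (g ++ [a] <+: ·), pathProd ξ z * uhatB ξ σ u H b z (g ++ [a])
      = pathProd ξ (g ++ [a]) * expUtil σ u Z (g ++ [a])) :
    ∑ z ∈ Z.filter (g <+: ·), pathProd ξ z * uhatBA ξ σ u H b z g a
      = pathProd ξ g * expUtil σ u Z (g ++ [a]) := by
  have hmass := sum_pathProd_filter_prefix hclosed hZH hterm hξsum g hg
  have hmass_next := sum_pathProd_filter_prefix hclosed hZH hterm hξsum _ (mem_legal.1 ha)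
  have hξ : ξ g a ≠ 0 := (hξpos g hg hgZ a ha).ne'
  have hfilter : (Z.filter (g <+: ·)).filter (g ++ [a] <+: ·) = Z.filter (g ++ [a] <+: ·) := by
    rw [Finset.filter_filter]
    exact Finset.filter_congr fun z _ => and_iff_right_of_imp ((List.prefix_append g [a]).trans)
  rw [pathProd_append_singleton] at hnext hmass_next
  calc ∑ z ∈ Z.filter (g <+: ·), pathProd ξ z * uhatBA ξ σ u H b z g a
      = ∑ z ∈ Z.filter (g <+: ·), (pathProd ξ z * b g a + if g ++ [a] <+: z then
          (pathProd ξ z * uhatB ξ σ u H b z (g ++ [a]) - pathProd ξ z * b g a) / ξ g a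
          else 0) := by
        refine Finset.sum_congr rfl fun z hz => ?_
        obtain ⟨hz, hp⟩ := Finset.mem_filter.mp hz
        have hne : g ≠ z := by rintro rfl; exact hgZ hz
        by_cases hza : g ++ [a] <+: z
        · simp only [uhatBA, if_pos hza]
          ring
        · simp only [uhatBA, if_neg hza, if_pos (And.intro hp hne), add_zero]
    _ = pathProd ξ g * b g a + (pathProd ξ g * ξ g a * expUtil σ u Z (g ++ [a])
          - pathProd ξ g * ξ g a * b g a) / ξ g a := by
        rw [Finset.sum_add_distrib, ← Finset.sum_mul, hmass, ← Finset.sum_filter, hfilter,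
          ← Finset.sum_div, Finset.sum_sub_distrib, hnext, ← Finset.sum_mul, hmass_next]
    _ = pathProd ξ g * expUtil σ u Z (g ++ [a]) := by
        field_simp
        ring

lemma sum_uhatB (hclosed : ∀ h ∈ H, ∀ h' : List A, h' <+: h → h' ∈ H)
    (hZH : Z ⊆ H) (hterm : ∀ z ∈ Z, ∀ h ∈ H, z <+: h → z = h)
    (hξpos : ∀ h ∈ H, h ∉ Z → ∀ a ∈ legal H h, 0 < ξ h a)
    (hξsum : ∀ h ∈ H, h ∉ Z → ∑ a ∈ legal H h, ξ h a = 1) :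
    ∀ g ∈ H, ∑ z ∈ Z.filter (g <+: ·), pathProd ξ z * uhatB ξ σ u H b z g
      = pathProd ξ g * expUtil σ u Z g := by
  refine legal_induction H Z (fun g hg => ?_) fun g hg hgZ ih => ?_
  · rw [filter_prefix_eq_singleton hZH hterm hg, Finset.sum_singleton, uhatB_self,
      expUtil_of_mem σ hZH hterm u hg]
  calc ∑ z ∈ Z.filter (g <+: ·), pathProd ξ z * uhatB ξ σ u H b z g
      = ∑ z ∈ Z.filter (g <+: ·), ∑ a ∈ legal H g,
          σ g a * (pathProd ξ z * uhatBA ξ σ u H b z g a) := by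
        refine Finset.sum_congr rfl fun z hz => ?_
        obtain ⟨hz, hp⟩ := Finset.mem_filter.mp hz
        rw [uhatB_eq_sum_uhatBA ξ σ u b hp (by rintro rfl; exact hgZ hz), Finset.mul_sum]
        exact Finset.sum_congr rfl fun a _ => mul_left_comm _ _ _
    _ = ∑ a ∈ legal H g, σ g a * (pathProd ξ g * expUtil σ u Z (g ++ [a])) := by
        rw [Finset.sum_comm]
        refine Finset.sum_congr rfl fun a ha => ?_
        rw [← Finset.mul_sum,
          sum_uhatBA_of_sum_uhatB ξ σ u b hclosed hZH hterm hξpos hξsum hg hgZ ha (ih a ha)]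
    _ = pathProd ξ g * expUtil σ u Z g := by
        rw [expUtil_eq_sum_legal hclosed hZH σ u hgZ, Finset.mul_sum]
        exact Finset.sum_congr rfl fun a _ => mul_left_comm _ _ _

end Estimator

theorem baseline_enhanced_cfv_estimate_same_expectation_general
    (H Z : Finset (List A))
    (hclosed : ∀ h ∈ H, ∀ h' : List A, h' <+: h → h' ∈ H)
    (hZH : Z ⊆ H)
    (hterm : ∀ z ∈ Z, ∀ h ∈ H, z <+: h → z = h)
    (ξ : List A → A → ℝ)
    (hξpos : ∀ h ∈ H, h ∉ Z → ∀ a ∈ legal H h, 0 < ξ h a)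
    (hξsum : ∀ h ∈ H, h ∉ Z → ∑ a ∈ legal H h, ξ h a = 1)
    (σ : List A → A → ℝ)
    {N : Type*} [DecidableEq N] (τ : List A → N) (i : N) (u : List A → ℝ)
    (I : Finset (List A))
    (hIH : ∀ h ∈ I, h ∈ H ∧ h ∉ Z ∧ τ h = i)
    (b : List A → A → ℝ) (a : A) (haI : ∀ h ∈ I, a ∈ legal H h) :
    (∑ z ∈ Z, pathProd ξ z *
        ∑ h ∈ I.filter (fun h => h <+: z),
          oppProd σ τ i h / pathProd ξ h * uhatBA ξ σ u H b z h a)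
      = ∑ z ∈ Z, pathProd ξ z *
          ∑ h ∈ I.filter (fun h => h ++ [a] <+: z),
            oppProd σ τ i (h ++ [a]) * sfxProd σ (h ++ [a]) z * u z / pathProd ξ z := by
  have hq : ∀ g ∈ H, pathProd ξ g ≠ 0 := fun g hg =>
    (pathProd_pos hclosed hterm hξpos g hg).ne'
  have hbaseline : ∀ h ∈ I, ∑ z ∈ Z.filter (h <+: ·),
      pathProd ξ z * (oppProd σ τ i h / pathProd ξ h * uhatBA ξ σ u H b z h a)
        = oppProd σ τ i h * expUtil σ u Z (h ++ [a]) := by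
    intro h hI
    obtain ⟨hH, hZ, -⟩ := hIH h hI
    have ha := haI h hI
    have hsum := sum_uhatBA_of_sum_uhatB ξ σ u b hclosed hZH hterm hξpos hξsum hH hZ ha
      (sum_uhatB ξ σ u b hclosed hZH hterm hξpos hξsum _ (mem_legal.1 ha))
    simp_rw [mul_left_comm (pathProd ξ _), ← Finset.mul_sum, hsum]
    field_simp [hq h hH]
  have hsampled : ∀ h ∈ I, ∑ z ∈ Z.filter (h ++ [a] <+: ·),
      pathProd ξ z * (oppProd σ τ i (h ++ [a]) * sfxProd σ (h ++ [a]) z * u z / pathProd ξ z)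
        = oppProd σ τ i h * expUtil σ u Z (h ++ [a]) := by
    intro h hI
    rw [oppProd_append_singleton_of_eq σ τ (hIH h hI).2.2, expUtil, Finset.mul_sum]
    refine Finset.sum_congr rfl fun z hz => ?_
    field_simp [hq z (hZH (Finset.mem_filter.mp hz).1)]
  rw [sum_mul_sum_filter_comm, sum_mul_sum_filter_comm, Finset.sum_congr rfl hbaseline,
    Finset.sum_congr rfl hsampled]

/-- **The baseline-enhanced counterfactual value estimate has the same expectation as the
original outcome-sampling estimate** (Lemma 6 in the paper): for every information set
`I` of player `i` and legal action `a` at `I`,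
`E_{z∼ξ}[v̂_i^b(σ,I,a|z)] = E_{z∼ξ}[ṽ_i(σ,I,a|z)]`. -/
theorem baseline_enhanced_cfv_estimate_same_expectation
    (H Z : Finset (List A))
    (hempty : ([] : List A) ∈ H)
    (hclosed : ∀ h ∈ H, ∀ h' : List A, h' <+: h → h' ∈ H)
    (hZH : Z ⊆ H)
    (hreach : ∀ h ∈ H, ∃ z ∈ Z, h <+: z)
    (hterm : ∀ z ∈ Z, ∀ h ∈ H, z <+: h → z = h)
    (hlegal : ∀ h ∈ H, h ∉ Z → (legal H h).Nonempty)
    (ξ : List A → A → ℝ)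
    (hξpos : ∀ h ∈ H, h ∉ Z → ∀ a ∈ legal H h, 0 < ξ h a)
    (hξsum : ∀ h ∈ H, h ∉ Z → ∑ a ∈ legal H h, ξ h a = 1)
    (σ : List A → A → ℝ)
    (hσnn : ∀ h ∈ H, h ∉ Z → ∀ a ∈ legal H h, 0 ≤ σ h a)
    (hσsum : ∀ h ∈ H, h ∉ Z → ∑ a ∈ legal H h, σ h a = 1)
    {N : Type*} [DecidableEq N] (τ : List A → N) (i : N) (u : List A → ℝ)
    (I : Finset (List A))
    (hIH : ∀ h ∈ I, h ∈ H ∧ h ∉ Z ∧ τ h = i)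
    (hIact : ∀ h ∈ I, ∀ h' ∈ I, legal H h = legal H h')
    (hIanti : ∀ h ∈ I, ∀ h' ∈ I, h <+: h' → h = h')
    (b : List A → A → ℝ) (a : A) (haI : ∀ h ∈ I, a ∈ legal H h) :
    (∑ z ∈ Z, pathProd ξ z *
        ∑ h ∈ I.filter (fun h => h <+: z),
          oppProd σ τ i h / pathProd ξ h * uhatBA ξ σ u H b z h a)
      = ∑ z ∈ Z, pathProd ξ z *
          ∑ h ∈ I.filter (fun h => h ++ [a] <+: z),
            oppProd σ τ i (h ++ [a]) * sfxProd σ (h ++ [a]) z * u z / pathProd ξ z :=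
  baseline_enhanced_cfv_estimate_same_expectation_general H Z hclosed hZH hterm ξ hξpos hξsum σ τ i
    u I hIH b a haI
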